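/- arXiv:0807.0131 — 2 statements merged into one kernel-verified Lean document; each statement's English description precedes it below -/
import Mathlib

section
/- The function H(x,y) = ((4ax⁴ - 5)²x² + 25y²)² / (625(ax⁴ - 1)⁵) is a first integral of the system ẋ = -y + a y x⁴, ẏ = x + 5a x³ y² - (4/5)a x⁵ on the set where a x⁴ ≠ 1. -/
/-!
Write `u = a x⁴` and `N = (4u - 5)² x² + 25 y²`, so that `H = N² / (625 (u - 1)⁵)`.
Then `∂ₓN = 10 x (4u - 5)(4u - 1)` and `∂ᵧH = 100 N y / (625 (u - 1)⁵)`, and since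
`ẋ = y (u - 1)`, the Lie derivative of `H` along the field is `N y / (625 (u - 1)⁵)` times
`20 x (4u - 5)((4u - 1)(u - 1) - u (4u - 5) - 1)`, whose last factor vanishes identically.
-/

section FirstIntegral

variable (a x y : ℝ)

theorem hasDerivAt_firstIntegral_num_fst :
    HasDerivAt (fun x' : ℝ => (4 * a * x' ^ 4 - 5) ^ 2 * x' ^ 2 + 25 * y ^ 2)
      (10 * x * (4 * a * x ^ 4 - 5) * (4 * a * x ^ 4 - 1)) x := by
  have h := ((((hasDerivAt_pow 4 x).const_mul (4 * a)).sub_const 5).pow 2).mul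
    (hasDerivAt_pow 2 x) |>.add_const (25 * y ^ 2)
  refine h.congr_deriv ?_
  simp only [Pi.pow_apply]
  push_cast
  ring

theorem hasDerivAt_firstIntegral_fst (h : a * x ^ 4 ≠ 1) :
    HasDerivAt (fun x' : ℝ =>
        ((4 * a * x' ^ 4 - 5) ^ 2 * x' ^ 2 + 25 * y ^ 2) ^ 2 / (625 * (a * x' ^ 4 - 1) ^ 5))
      (((4 * a * x ^ 4 - 5) ^ 2 * x ^ 2 + 25 * y ^ 2) *
          (20 * x * (4 * a * x ^ 4 - 5) * (4 * a * x ^ 4 - 1) * (a * x ^ 4 - 1)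
            - 20 * a * x ^ 3 * ((4 * a * x ^ 4 - 5) ^ 2 * x ^ 2 + 25 * y ^ 2)) /
        (625 * (a * x ^ 4 - 1) ^ 6)) x := by
  have hu : a * x ^ 4 - 1 ≠ 0 := sub_ne_zero.mpr h
  have hden := ((((hasDerivAt_pow 4 x).const_mul a).sub_const 1).pow 5).const_mul (625 : ℝ)
  have hH := ((hasDerivAt_firstIntegral_num_fst a x y).pow 2).div hden (by simpa using hu)
  refine hH.congr_deriv ?_
  simp only [Pi.pow_apply]
  push_cast
  field_simp
  ring

theorem hasDerivAt_firstIntegral_snd :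
    HasDerivAt (fun y' : ℝ =>
        ((4 * a * x ^ 4 - 5) ^ 2 * x ^ 2 + 25 * y' ^ 2) ^ 2 / (625 * (a * x ^ 4 - 1) ^ 5))
      (100 * ((4 * a * x ^ 4 - 5) ^ 2 * x ^ 2 + 25 * y ^ 2) * y /
        (625 * (a * x ^ 4 - 1) ^ 5)) y := by
  have h := ((((hasDerivAt_pow 2 y).const_mul (25 : ℝ)).const_add
    ((4 * a * x ^ 4 - 5) ^ 2 * x ^ 2)).pow 2).div_const (625 * (a * x ^ 4 - 1) ^ 5)
  refine h.congr_deriv ?_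
  push_cast
  ring

end FirstIntegral

/-- H(x,y) = ((4ax⁴-5)²x²+25y²)²/(625(ax⁴-1)⁵) is a first integral of
ẋ = -y+ayx⁴, ẏ = x+5ax³y²-(4/5)ax⁵ wherever ax⁴ ≠ 1. -/
theorem stmt_5 (a : ℝ) :
    ∀ x y : ℝ, a * x ^ 4 ≠ 1 →
      (-y + a * y * x ^ 4) *
        deriv (fun x' : ℝ =>
          ((4 * a * x' ^ 4 - 5) ^ 2 * x' ^ 2 + 25 * y ^ 2) ^ 2 /
            (625 * (a * x' ^ 4 - 1) ^ 5)) x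
      + (x + 5 * a * x ^ 3 * y ^ 2 - (4/5) * a * x ^ 5) *
        deriv (fun y' : ℝ =>
          ((4 * a * x ^ 4 - 5) ^ 2 * x ^ 2 + 25 * y' ^ 2) ^ 2 /
            (625 * (a * x ^ 4 - 1) ^ 5)) y = 0 := by
  intro x y h
  have hu : a * x ^ 4 - 1 ≠ 0 := sub_ne_zero.mpr h
  rw [(hasDerivAt_firstIntegral_fst a x y h).deriv, (hasDerivAt_firstIntegral_snd a x y).deriv]
  field_simp
  ring
end

section
/- Along any solution of ẋ = -y + a y x⁴, ẏ = x + a x³ y² staying in the region a x⁴ - 1 > 0 (respectively using a fixed real branch of the fourth root), the functions u = x/(a x⁴ - 1)^{1/4}, v = y/(a x⁴ - 1)^{1/4} satisfy u̇ = -v, v̇ = u. -/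
/-!
Along the flow, `ẋ = y (a x⁴ - 1)`, so `P = a x⁴ - 1` satisfies `Ṗ / (4 P) = a x³ y`. Dividing a
function `f` by `P ^ (1/4)` therefore changes its derivative from `ḟ` to `(ḟ - a x³ y f) / P ^ (1/4)`,
and the nonlinear terms cancel: `ẋ - a x⁴ y = -y` and `ẏ - a x³ y · y = x`.
-/

theorem HasDerivAt.div_rpow_const {f g : ℝ → ℝ} {f' g' t : ℝ} (r : ℝ) (hf : HasDerivAt f f' t)
    (hg : HasDerivAt g g' t) (hpos : 0 < g t) :
    HasDerivAt (fun s => f s / g s ^ r) ((f' - r * g' / g t * f t) / g t ^ r) t := by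
  have hne : g t ^ r ≠ 0 := (Real.rpow_pos_of_pos hpos r).ne'
  refine (hf.div (hg.rpow_const (p := r) (Or.inl hpos.ne')) hne).congr_deriv ?_
  rw [Real.rpow_sub_one hpos.ne']
  field_simp

/-- u = x/(ax⁴-1)^{1/4}, v = y/(ax⁴-1)^{1/4} linearizes ẋ = -y+ayx⁴,
ẏ = x+ax³y² on the region ax⁴-1 > 0. -/
theorem stmt_16 (a : ℝ) (x y : ℝ → ℝ)
    (hx : ∀ t, HasDerivAt x (-(y t) + a * y t * (x t) ^ 4) t)
    (hy : ∀ t, HasDerivAt y (x t + a * (x t) ^ 3 * (y t) ^ 2) t)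
    (hpos : ∀ t, a * (x t) ^ 4 - 1 > 0) :
    ∀ t,
      HasDerivAt (fun s => x s / (a * (x s) ^ 4 - 1) ^ ((1:ℝ)/4))
        (-(y t / (a * (x t) ^ 4 - 1) ^ ((1:ℝ)/4))) t ∧
      HasDerivAt (fun s => y s / (a * (x s) ^ 4 - 1) ^ ((1:ℝ)/4))
        (x t / (a * (x t) ^ 4 - 1) ^ ((1:ℝ)/4)) t := by
  intro t
  have hP : HasDerivAt (fun s => a * x s ^ 4 - 1)
      (a * (4 * x t ^ 3 * (-(y t) + a * y t * x t ^ 4))) t := by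
    simpa using (((hx t).pow 4).const_mul a).sub_const 1
  have hP_ne : a * x t ^ 4 - 1 ≠ 0 := (hpos t).ne'
  have hlog : (1 / 4 : ℝ) * (a * (4 * x t ^ 3 * (-(y t) + a * y t * x t ^ 4))) /
      (a * x t ^ 4 - 1) = a * x t ^ 3 * y t := by
    field_simp
    ring
  constructor
  · refine ((hx t).div_rpow_const _ hP (hpos t)).congr_deriv ?_
    rw [hlog]
    ring
  · refine ((hy t).div_rpow_const _ hP (hpos t)).congr_deriv ?_
    rw [hlog]
    ring
end
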